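/- q-analogue of Bailey's transformation (Corollary A.7): for a nonnegative integer m, ∑_{k=0}^{⌊m/2⌋} (D²;q)_{2k} / ( (q²;q²)_k (R;q²)_k ) · q^{k(2k-2)} R^k · (D² q^{2k}/B; q)_{m-2k} / (q;q)_{m-2k} · B^{m-2k} = ∑_{s=0}^{m} (D²;q)_{m-s} (R/q;q²)_{m-s} / ( (q;q)_{m-s} (R/q;q)_{m-s} ) · (1/B;q)_s / (q;q)_s · B^s. -/

import Mathlib

open Finset

noncomputable section

/-- The field of rational functions over `ℚ` in four variables `q`, `B`, `R`, `D`. -/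
abbrev K : Type := FractionRing (MvPolynomial (Fin 4) ℚ)

/-- The formal variable `q`. -/
def q : K := algebraMap (MvPolynomial (Fin 4) ℚ) K (MvPolynomial.X 0)

/-- The formal variable `B`. -/
def B : K := algebraMap (MvPolynomial (Fin 4) ℚ) K (MvPolynomial.X 1)

/-- The formal variable `R`. -/
def R : K := algebraMap (MvPolynomial (Fin 4) ℚ) K (MvPolynomial.X 2)

/-- The formal variable `D`. -/
def D : K := algebraMap (MvPolynomial (Fin 4) ℚ) K (MvPolynomial.X 3)

/-- The q-Pochhammer symbol `(X;Qb)_r = ∏_{j=0}^{r-1} (1 - X Qb^j)`. -/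
def pch (X Qb : K) (r : ℕ) : K := ∏ j ∈ Finset.range r, (1 - X * Qb ^ j)

/-!
Expanding `(D²q^{2k}/B;q)_{m-2k}` by the q-Chu–Vandermonde convolution with `1/B` splits off the
factor `(1/B;q)_s B^s / (q;q)_s`. After exchanging the two sums and merging
`(D²;q)_{2k} (D²q^{2k};q)_{n-2k} = (D²;q)_n` with `n = m - s`, what is left is the inner sum
`∑_k q^{2k(k-1)} R^k / ((q²;q²)_k (R;q²)_k (q;q)_{n-2k})`. It satisfies the first-order
recurrence of `(R/q;q²)_n / ((q;q)_n (R/q;q)_n)`, by creative telescoping in `k` with the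
certificate `baileyCert`.
-/

theorem pch_zero (X Qb : K) : pch X Qb 0 = 1 := prod_range_zero _

theorem pch_succ (X Qb : K) (n : ℕ) : pch X Qb (n + 1) = pch X Qb n * (1 - X * Qb ^ n) :=
  prod_range_succ _ _

theorem pch_add (X Qb : K) (a b : ℕ) : pch X Qb (a + b) = pch X Qb a * pch (X * Qb ^ a) Qb b := by
  simp only [pch, prod_range_add, mul_assoc, ← pow_add]

theorem algebraMap_ne_zero_of_eval_ne_zero {p : MvPolynomial (Fin 4) ℚ} (x : Fin 4 → ℚ)
    (h : MvPolynomial.eval x p ≠ 0) : algebraMap (MvPolynomial (Fin 4) ℚ) K p ≠ 0 := by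
  rw [ne_eq, IsFractionRing.to_map_eq_zero_iff]
  rintro rfl
  exact h (map_zero _)

theorem q_ne_zero : q ≠ 0 :=
  algebraMap_ne_zero_of_eval_ne_zero (fun _ => 1) (by simp)

theorem B_ne_zero : B ≠ 0 :=
  algebraMap_ne_zero_of_eval_ne_zero (fun _ => 1) (by simp)

theorem one_sub_q_pow_ne_zero {i : ℕ} (hi : i ≠ 0) : 1 - q ^ i ≠ 0 := by
  have : 1 - q ^ i = algebraMap (MvPolynomial (Fin 4) ℚ) K (1 - .X 0 ^ i) := by simp [q]
  rw [this]
  refine algebraMap_ne_zero_of_eval_ne_zero (fun _ => 2) ?_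
  simpa [sub_eq_zero] using (one_lt_pow₀ (by norm_num : (1 : ℚ) < 2) hi).ne

theorem one_sub_R_mul_q_pow_ne_zero (i : ℕ) : 1 - R * q ^ i ≠ 0 := by
  have : 1 - R * q ^ i = algebraMap (MvPolynomial (Fin 4) ℚ) K (1 - .X 2 * .X 0 ^ i) := by
    simp [q, R]
  rw [this]
  exact algebraMap_ne_zero_of_eval_ne_zero ![1, 1, 2, 1] (by simp; norm_num)

theorem one_sub_R_div_q_mul_q_pow_ne_zero (i : ℕ) : 1 - R / q * q ^ i ≠ 0 := by
  have : q - R * q ^ i = algebraMap (MvPolynomial (Fin 4) ℚ) K (.X 0 - .X 2 * .X 0 ^ i) := by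
    simp [q, R]
  have hne : q - R * q ^ i ≠ 0 :=
    this ▸ algebraMap_ne_zero_of_eval_ne_zero ![1, 1, 2, 1] (by simp; norm_num)
  contrapose! hne
  field_simp [q_ne_zero] at hne
  linear_combination hne

theorem pch_q_ne_zero (n : ℕ) : pch q q n ≠ 0 :=
  prod_ne_zero_iff.mpr fun i _ => by
    simpa [← pow_succ'] using one_sub_q_pow_ne_zero (Nat.succ_ne_zero i)

def gaussBinom {A : Type*} [CommSemiring A] (Q : A) : ℕ → ℕ → A
  | _, 0 => 1
  | 0, _ + 1 => 0
  | n + 1, j + 1 => gaussBinom Q n (j + 1) + Q ^ (n - j) * gaussBinom Q n j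

@[simp]
theorem gaussBinom_zero_right {A : Type*} [CommSemiring A] (Q : A) (n : ℕ) :
    gaussBinom Q n 0 = 1 := by
  cases n <;> rfl

theorem gaussBinom_eq_zero_of_lt {A : Type*} [CommSemiring A] (Q : A) {n j : ℕ} (h : n < j) :
    gaussBinom Q n j = 0 := by
  induction n generalizing j with
  | zero => obtain ⟨j, rfl⟩ := Nat.exists_eq_add_one.mpr h; rfl
  | succ n ih =>
    obtain ⟨j, rfl⟩ := Nat.exists_eq_add_one.mpr (Nat.zero_lt_of_lt h)
    simp only [gaussBinom, ih (by omega : n < j + 1), ih (by omega : n < j), mul_zero, add_zero]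

theorem gaussBinom_mul_pch (Q : K) {n j : ℕ} (h : j ≤ n) :
    gaussBinom Q n j * pch Q Q j * pch Q Q (n - j) = pch Q Q n := by
  induction n generalizing j with
  | zero => obtain rfl := Nat.le_zero.mp h; simp [pch_zero]
  | succ n ih =>
    rcases j with _ | i
    · simp [pch_zero]
    obtain ⟨d, rfl⟩ := Nat.exists_eq_add_of_le (Nat.le_of_succ_le_succ h)
    have upper : gaussBinom Q (i + d) (i + 1) * pch Q Q (i + 1) * pch Q Q d
        = pch Q Q (i + d) * (1 - Q ^ d) := by
      rcases d with _ | e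
      · simp [gaussBinom_eq_zero_of_lt Q (Nat.lt_succ_self i)]
      · rw [← ih (j := i + 1) (by omega), show i + (e + 1) - (i + 1) = e by omega, pch_succ Q Q e]
        ring
    have lower := ih (le_add_right le_rfl : i ≤ i + d)
    rw [Nat.add_sub_cancel_left] at lower
    simp only [gaussBinom, Nat.add_sub_add_right, Nat.add_sub_cancel_left]
    rw [pch_succ Q Q i] at upper ⊢
    rw [pch_succ Q Q (i + d)]
    linear_combination upper + Q ^ d * (1 - Q * Q ^ i) * lower

theorem pch_mul_eq_sum_gaussBinom (Q a b : K) (n : ℕ) :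
    pch (a * b) Q n
      = ∑ j ∈ range (n + 1), gaussBinom Q n j * a ^ j * pch b Q j * pch a Q (n - j) := by
  induction n with
  | zero => simp [pch_zero, gaussBinom]
  | succ n ih =>
    set X : ℕ → K := fun j => gaussBinom Q n j * a ^ j * pch b Q j * pch a Q (n + 1 - j)
    set Y : ℕ → K := fun j =>
      Q ^ (n - j) * gaussBinom Q n j * a ^ (j + 1) * pch b Q (j + 1) * pch a Q (n - j)
    have split : ∀ j ∈ range (n + 1),
        gaussBinom Q n j * a ^ j * pch b Q j * pch a Q (n - j) * (1 - a * b * Q ^ n)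
          = X j + Y j := by
      intro j hj
      obtain ⟨d, rfl⟩ := Nat.exists_eq_add_of_le (mem_range_succ_iff.mp hj)
      simp only [X, Y, show j + d + 1 - j = d + 1 by omega, Nat.add_sub_cancel_left,
        pch_succ, pow_add]
      ring
    have pascal : ∀ j ∈ range (n + 1),
        gaussBinom Q (n + 1) (j + 1) * a ^ (j + 1) * pch b Q (j + 1) * pch a Q (n + 1 - (j + 1))
          = X (j + 1) + Y j := by
      intro j _
      simp only [X, Y, gaussBinom, Nat.add_sub_add_right]
      ring
    have shift : ∑ j ∈ range (n + 1), X j = ∑ j ∈ range (n + 1), X (j + 1) + X 0 := by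
      rw [← sum_range_succ', sum_range_succ X (n + 1)]
      simp [X, gaussBinom_eq_zero_of_lt Q (Nat.lt_succ_self n)]
    rw [pch_succ, ih, sum_mul, sum_congr rfl split, sum_add_distrib, sum_range_succ' _ (n + 1),
      sum_congr rfl pascal, sum_add_distrib, shift, add_right_comm]
    simp only [X, gaussBinom_zero_right]

theorem pch_div_mul_pow_eq_sum (x c : K) (hc : c ≠ 0) (n : ℕ) :
    pch (x / c) q n / pch q q n * c ^ n
      = ∑ s ∈ range (n + 1),
          pch x q (n - s) / pch q q (n - s) * (pch c⁻¹ q s / pch q q s) * c ^ s := by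
  rw [div_eq_inv_mul x c, pch_mul_eq_sum_gaussBinom, ← sum_range_reflect, sum_div, sum_mul]
  refine sum_congr rfl fun s hs => ?_
  obtain ⟨d, rfl⟩ := Nat.exists_eq_add_of_le (mem_range_succ_iff.mp hs)
  have binom : gaussBinom q (s + d) d = pch q q (s + d) / (pch q q d * pch q q s) := by
    rw [← gaussBinom_mul_pch q (Nat.le_add_left d s), Nat.add_sub_cancel]
    field_simp [pch_q_ne_zero]
  rw [show s + d + 1 - 1 - s = d by omega, Nat.add_sub_cancel, Nat.add_sub_cancel_left, binom,
    inv_pow]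
  field_simp [pch_q_ne_zero]
  ring

-- `1/(q;q)_j`, extended by zero to `j < 0` (as `(q^{j+1};q)_∞/(q;q)_∞` is), so that
-- `qFactInv_sub_one` holds for every `j` and the telescoping step has no boundary cases.
def qFactInv (j : ℤ) : K := if 0 ≤ j then (pch q q j.toNat)⁻¹ else 0

theorem qFactInv_natCast (n : ℕ) : qFactInv n = (pch q q n)⁻¹ := by
  simp [qFactInv]

theorem qFactInv_of_neg {j : ℤ} (h : j < 0) : qFactInv j = 0 :=
  if_neg h.not_ge

theorem qFactInv_sub_one (j : ℤ) : qFactInv (j - 1) = (1 - q ^ j) * qFactInv j := by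
  rcases lt_trichotomy j 0 with h | rfl | h
  · simp [qFactInv_of_neg h, qFactInv_of_neg (by omega : j - 1 < 0)]
  · rw [zero_sub, zpow_zero, sub_self, zero_mul, qFactInv_of_neg (by norm_num)]
  · obtain ⟨t, rfl⟩ : ∃ t : ℕ, j = t + 1 := ⟨(j - 1).toNat, by omega⟩
    have ht : (1 : K) - q * q ^ t ≠ 0 := by
      simpa [← pow_succ'] using one_sub_q_pow_ne_zero t.succ_ne_zero
    rw [add_sub_cancel_right, qFactInv_natCast, ← Nat.cast_succ, qFactInv_natCast, zpow_natCast,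
      pch_succ, mul_inv, pow_succ']
    field_simp

theorem qFactInv_natCast_sub (a b : ℕ) :
    qFactInv ((a : ℤ) - b) = (1 - q ^ (a + 1) / q ^ b) * qFactInv ((a : ℤ) + 1 - b) := by
  rw [show (a : ℤ) - b = a + 1 - b - 1 by ring, qFactInv_sub_one, ← Nat.cast_succ,
    zpow_natCast_sub_natCast₀ q_ne_zero]

def baileyWeight (k : ℕ) : K :=
  q ^ ((k : ℤ) * (2 * (k : ℤ) - 2)) * R ^ k / (pch (q ^ 2) (q ^ 2) k * pch R (q ^ 2) k)

theorem baileyWeight_succ (k : ℕ) :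
    baileyWeight (k + 1)
      = baileyWeight k * (q ^ (4 * k) * R / ((1 - q ^ (2 * k + 2)) * (1 - R * q ^ (2 * k)))) := by
  have exponent : ((k + 1 : ℕ) : ℤ) * (2 * ((k + 1 : ℕ) : ℤ) - 2)
      = (k : ℤ) * (2 * (k : ℤ) - 2) + ((4 * k : ℕ) : ℤ) := by
    push_cast; ring
  rw [baileyWeight, baileyWeight, exponent, zpow_add₀ q_ne_zero, zpow_natCast, pch_succ,
    pch_succ, ← pow_mul, div_mul_div_comm]
  congr 1 <;> ring

def baileyTerm (n k : ℕ) : K := baileyWeight k * qFactInv ((n : ℤ) - (2 * k : ℕ))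

def baileyCert (n k : ℕ) : K :=
  q ^ (n + 1) * (1 - q ^ (2 * k)) * (R * q ^ (2 * k) - q ^ 2) / q ^ (2 * k + 2) *
    baileyTerm (n + 1) k

theorem baileyTerm_eq_zero {n k : ℕ} (h : n < 2 * k) : baileyTerm n k = 0 := by
  rw [baileyTerm, qFactInv_of_neg (by omega), mul_zero]

theorem baileyTerm_step (n k : ℕ) :
    (1 - q * q ^ n) * (1 - R / q * q ^ n) * baileyTerm (n + 1) k
        - (1 - R / q * (q ^ 2) ^ n) * baileyTerm n k
      = baileyCert n (k + 1) - baileyCert n k := by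
  have top : ((n + 1 : ℕ) : ℤ) - (2 * k : ℕ) = n + 1 - (2 * k : ℕ) := by push_cast; ring
  have shifted : ((n + 1 : ℕ) : ℤ) - (2 * (k + 1) : ℕ) = n - (2 * k : ℕ) - 1 := by
    push_cast; ring
  have h₁ : (1 : K) - q ^ (2 * k + 2) ≠ 0 := one_sub_q_pow_ne_zero (by omega)
  have h₂ : (1 : K) - R * q ^ (2 * k) ≠ 0 := one_sub_R_mul_q_pow_ne_zero _
  have hq := q_ne_zero
  simp only [baileyCert, baileyTerm, baileyWeight_succ]
  rw [top, shifted, qFactInv_sub_one, qFactInv_natCast_sub, zpow_natCast_sub_natCast₀ q_ne_zero]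
  field_simp
  ring

theorem sum_range_baileyTerm_of_lt {n N : ℕ} (h : n / 2 < N) :
    ∑ k ∈ range N, baileyTerm n k = ∑ k ∈ range (n / 2 + 1), baileyTerm n k :=
  (sum_subset (range_subset_range.mpr (by omega)) fun _ hk hk' =>
    baileyTerm_eq_zero (by simp only [mem_range] at hk hk'; omega)).symm

theorem sum_baileyTerm_recurrence (n : ℕ) :
    (1 - q * q ^ n) * (1 - R / q * q ^ n) * ∑ k ∈ range ((n + 1) / 2 + 1), baileyTerm (n + 1) k
      = (1 - R / q * (q ^ 2) ^ n) * ∑ k ∈ range (n / 2 + 1), baileyTerm n k := by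
  rw [← sum_range_baileyTerm_of_lt (N := n + 2) (by omega),
    ← sum_range_baileyTerm_of_lt (N := n + 2) (by omega), mul_sum, mul_sum, ← sub_eq_zero,
    ← sum_sub_distrib, sum_congr rfl fun k _ => baileyTerm_step n k, sum_range_sub]
  simp [baileyCert, baileyTerm_eq_zero (by omega : n + 1 < 2 * (n + 2))]

theorem sum_baileyTerm (n : ℕ) :
    ∑ k ∈ range (n / 2 + 1), baileyTerm n k
      = pch (R / q) (q ^ 2) n / (pch q q n * pch (R / q) q n) := by
  induction n with
  | zero => simp [baileyTerm, baileyWeight, qFactInv, pch_zero]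
  | succ n ih =>
    have h₁ : (1 : K) - q * q ^ n ≠ 0 := by
      simpa [← pow_succ'] using one_sub_q_pow_ne_zero n.succ_ne_zero
    have h₂ := one_sub_R_div_q_mul_q_pow_ne_zero n
    apply mul_left_cancel₀ (mul_ne_zero h₁ h₂)
    rw [sum_baileyTerm_recurrence, ih, pch_succ, pch_succ, pch_succ]
    generalize (1 : K) - q * q ^ n = a at h₁ ⊢
    generalize (1 : K) - R / q * q ^ n = b at h₂ ⊢
    field_simp

theorem pch_mul_baileyTerm (x : K) {n k : ℕ} (h : 2 * k ≤ n) :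
    pch x q n * baileyTerm n k
      = pch x q (2 * k) / (pch (q ^ 2) (q ^ 2) k * pch R (q ^ 2) k) *
          q ^ ((k : ℤ) * (2 * (k : ℤ) - 2)) * R ^ k *
          (pch (x * q ^ (2 * k)) q (n - 2 * k) / pch q q (n - 2 * k)) := by
  obtain ⟨d, rfl⟩ := Nat.exists_eq_add_of_le h
  rw [baileyTerm, baileyWeight, pch_add, Nat.add_sub_cancel_left, Nat.cast_add,
    add_sub_cancel_left, qFactInv_natCast]
  ring

/-- q-analogue of Bailey's transformation: for a nonnegative integer `m`,
`∑_{k=0}^{⌊m/2⌋} (D²;q)_{2k}/((q²;q²)_k (R;q²)_k) q^{k(2k-2)} R^k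
    (D²q^{2k}/B;q)_{m-2k}/(q;q)_{m-2k} B^{m-2k}
 = ∑_{s=0}^{m} (D²;q)_{m-s} (R/q;q²)_{m-s} / ((q;q)_{m-s} (R/q;q)_{m-s})
    (1/B;q)_s/(q;q)_s B^s`. -/
theorem q_bailey_transformation (m : ℕ) :
    ∑ k ∈ Finset.range (m / 2 + 1),
        pch (D ^ 2) q (2 * k) / (pch (q ^ 2) (q ^ 2) k * pch R (q ^ 2) k) *
          q ^ ((k : ℤ) * (2 * (k : ℤ) - 2)) * R ^ k *
          (pch (D ^ 2 * q ^ (2 * k) / B) q (m - 2 * k) / pch q q (m - 2 * k)) *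
          B ^ (m - 2 * k) =
      ∑ s ∈ Finset.range (m + 1),
        pch (D ^ 2) q (m - s) / pch q q (m - s) *
          (pch (R / q) (q ^ 2) (m - s) / pch (R / q) q (m - s)) *
          (pch B⁻¹ q s / pch q q s) * B ^ s := by
  calc _ = ∑ k ∈ range (m / 2 + 1), ∑ s ∈ range (m - 2 * k + 1),
          pch (D ^ 2) q (m - s) * baileyTerm (m - s) k * (pch B⁻¹ q s / pch q q s * B ^ s) := by
        refine sum_congr rfl fun k hk => ?_
        rw [mul_assoc, pch_div_mul_pow_eq_sum _ _ B_ne_zero, mul_sum]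
        refine sum_congr rfl fun s hs => ?_
        rw [pch_mul_baileyTerm _ (by simp only [mem_range] at hk hs; omega), Nat.sub_right_comm]
        ring
    _ = ∑ s ∈ range (m + 1), ∑ k ∈ range ((m - s) / 2 + 1),
          pch (D ^ 2) q (m - s) * baileyTerm (m - s) k * (pch B⁻¹ q s / pch q q s * B ^ s) :=
        sum_comm' fun k s => by simp only [mem_range]; omega
    _ = _ := sum_congr rfl fun s _ => by
        rw [← sum_mul, ← mul_sum, sum_baileyTerm]
        ring

end
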